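/- Let μ ∈ Λ(n,d) and λ ∈ Λ(m,d), and let S be the set of n×m matrices with nonnegative integer entries having row sums μ and column sums λ, each read (row by row) as an element ν of Λ(nm,d). Then the Kronecker product M^μ ⊗_k M^λ, with S_d acting diagonally, is isomorphic as a kS_d-module to ⊕_{ν∈S} M^ν. -/

import Mathlib

/-!
**Statement 13.**  Kronecker products of permutation modules for the symmetric group.
`Λ(n,d)` is the set of sequences of `n` nonnegative integers summing to `d`; a composition
is presented by a "coloring" `c : Fin d → Fin n` realizing it, with Young subgroup
`S_λ ≤ S_d` the stabilizer of the coloring; `M^λ := k[S_d/S_λ]` is the permutation module.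
-/

open CategoryTheory

noncomputable section

variable (k : Type) [CommRing k] (d : ℕ)

/-- The Young subgroup of `S_d` determined by a coloring `c : Fin d → Fin n`. -/
def youngSubgroup {n : ℕ} (c : Fin d → Fin n) : Subgroup (Equiv.Perm (Fin d)) where
  carrier := {σ | ∀ i, c (σ i) = c i}
  mul_mem' := fun {σ τ} hσ hτ i => by
    simp only [Equiv.Perm.mul_apply]
    rw [hσ (τ i), hτ i]
  one_mem' := fun i => rfl
  inv_mem' := fun {σ} hσ i => by
    conv_rhs => rw [← Equiv.apply_symm_apply σ i]
    exact (hσ (σ⁻¹ i)).symm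

/-- A coloring `c : Fin d → Fin n` realizes `λ ∈ Λ(n,d)` if exactly `λ_j` indices have
color `j`. -/
def realizes {n : ℕ} (c : Fin d → Fin n) (lam : Fin n → ℕ) : Prop :=
  ∀ j, (Finset.univ.filter fun i => c i = j).card = lam j

/-- The permutation module `M^λ = k[S_d/S_λ]` on the left cosets of a Young subgroup. -/
def permModule {n : ℕ} (c : Fin d → Fin n) : Rep k (Equiv.Perm (Fin d)) :=
  Rep.of (Representation.ofMulAction k (Equiv.Perm (Fin d))
    (Equiv.Perm (Fin d) ⧸ youngSubgroup d c))

open scoped DirectSum in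
/-- The direct sum of a family of representations of a group, as an object of `Rep k G`. -/
def repDirectSum {G : Type} [Monoid G] {I : Type} (F : I → Rep.{0} k G) : Rep.{0} k G :=
  Rep.of (X := ⨁ i : I, F i)
    { toFun := fun g => DFinsupp.mapRange.linearMap (fun i => (F i).ρ g)
      map_one' := by
        have h : (fun i => (F i).ρ 1) = fun i => (LinearMap.id : F i →ₗ[k] F i) := by
          funext i; rw [map_one]; rfl
        show DFinsupp.mapRange.linearMap _ = _
        rw [h]
        exact DFinsupp.mapRange.linearMap_id
      map_mul' := fun g g' => by
        have h : (fun i => (F i).ρ (g * g'))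
            = fun i => ((F i).ρ g).comp ((F i).ρ g') := by
          funext i; rw [map_mul]; rfl
        show DFinsupp.mapRange.linearMap _ = _
        rw [h]
        exact DFinsupp.mapRange.linearMap_comp _ _ }

/-- Reading an `n × m` matrix position row by row as an index in `Fin (n*m)`. -/
def rowMajor (n m : ℕ) : Fin n × Fin m ≃ Fin (n * m) :=
  (Equiv.prodComm (Fin n) (Fin m)).trans (finProdFinEquiv.trans (finCongr (mul_comm m n)))

/-- The set of `n × m` matrices with nonnegative integer entries, row sums `μ` and column
sums `λ`. -/
def matrixSet {n m : ℕ} (mu : Fin n → ℕ) (lam : Fin m → ℕ) : Type :=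
  {M : Fin n → Fin m → ℕ // (∀ r, ∑ c, M r c = mu r) ∧ (∀ c, ∑ r, M r c = lam c)}

/-!
`G ⧸ S_λ` (`G = S_d`) is, by orbit–stabilizer, the `G`-set of colorings `Fin d → Fin n` with
color counts `λ`, on which `G` acts by permuting positions. A pair of colorings with counts `μ`
and `λ` is one coloring by pairs of colors; its counts form a matrix with row sums `μ` and column
sums `λ`, which permuting positions does not change. Hence `(G ⧸ S_μ) × (G ⧸ S_λ)` splits
`G`-equivariantly as `Σ M, G ⧸ S_{ν(M)}`. Linearizing, the product of `G`-sets becomes the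
tensor product and the disjoint union the direct sum, since the standard bases are permuted.
-/

open Finset MulAction

lemma Equiv.symm_apply_smul {G X Y : Type*} [SMul G X] [SMul G Y] (e : X ≃ Y)
    (he : ∀ (g : G) x, e (g • x) = g • e x) (g : G) (y : Y) :
    e.symm (g • y) = g • e.symm y := by
  rw [e.symm_apply_eq, he, e.apply_symm_apply]

lemma DFinsupp.basis_apply {ι R : Type*} [Semiring R] [DecidableEq ι] {M : ι → Type*}
    [∀ i, AddCommMonoid (M i)] [∀ i, Module R (M i)] {η : ι → Type*}
    (b : ∀ i, Module.Basis (η i) R (M i)) (x : Σ i, η i) :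
    DFinsupp.basis b x = DFinsupp.single x.1 (b x.1 x.2) := by
  simp [DFinsupp.basis]

namespace Representation

variable {k G V W ι κ : Type*} [CommSemiring k] [Monoid G] [AddCommMonoid V] [Module k V]
  [AddCommMonoid W] [Module k W] [MulAction G ι] [MulAction G κ]
  {ρ : Representation k G V} {σ : Representation k G W}

def Equiv.ofBasis (b : Module.Basis ι k V) (c : Module.Basis κ k W)
    (hb : ∀ g i, ρ g (b i) = b (g • i)) (hc : ∀ g j, σ g (c j) = c (g • j))
    (e : ι ≃ κ) (he : ∀ (g : G) i, e (g • i) = g • e i) : ρ.Equiv σ :=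
  .mk (b.equiv c e) fun g => b.ext fun i => by simp [hb, hc, he]

lemma ofMulAction_apply_basis {X : Type*} [MulAction G X] (g : G) (x : X) :
    ofMulAction k G X g (MonoidAlgebra.basis X k x) = MonoidAlgebra.basis X k (g • x) := by
  simp [ofMulAction_single]

lemma tprod_apply_tensorProduct (b : Module.Basis ι k V) (c : Module.Basis κ k W)
    (hb : ∀ g i, ρ g (b i) = b (g • i)) (hc : ∀ g j, σ g (c j) = c (g • j))
    (g : G) (p : ι × κ) :
    ρ.tprod σ g (b.tensorProduct c p) = b.tensorProduct c (g • p) := by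
  obtain ⟨i, j⟩ := p
  simp [tprod_apply, Module.Basis.tensorProduct_apply, hb, hc]

end Representation

section DirectSum

variable {k} {G I : Type} [Monoid G] [DecidableEq I] (F : I → Rep k G)

lemma repDirectSum_ρ_apply_single (g : G) (i : I) (v : F i) :
    (repDirectSum k F).ρ g (DFinsupp.single i v) = DFinsupp.single i ((F i).ρ g v) :=
  DFinsupp.mapRange_single (hf := fun _ => map_zero _)

lemma repDirectSum_ρ_apply_basis {η : I → Type*} [∀ i, MulAction G (η i)]
    (b : ∀ i, Module.Basis (η i) k (F i)) (hb : ∀ i g x, (F i).ρ g (b i x) = b i (g • x))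
    (g : G) (x : Σ i, η i) :
    (repDirectSum k F).ρ g (DFinsupp.basis b x) = DFinsupp.basis b (g • x) := by
  obtain ⟨i, x⟩ := x
  rw [DFinsupp.basis_apply, repDirectSum_ρ_apply_single, hb, Sigma.smul_mk, DFinsupp.basis_apply]

end DirectSum

open MonoidalCategory in
def Rep.ofMulActionTensorIsoDirectSum {G X Y I : Type} [Monoid G] [MulAction G X]
    [MulAction G Y] [DecidableEq I] {Z : I → Type} [∀ i, MulAction G (Z i)]
    (e : X × Y ≃ Σ i, Z i) (he : ∀ (g : G) p, e (g • p) = g • e p) :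
    Rep.ofMulAction k G X ⊗ Rep.ofMulAction k G Y ≅
      repDirectSum k fun i => Rep.ofMulAction k G (Z i) :=
  Rep.mkIso <| Representation.Equiv.ofBasis
    ((MonoidAlgebra.basis X k).tensorProduct (MonoidAlgebra.basis Y k))
    (DFinsupp.basis fun i => MonoidAlgebra.basis (Z i) k)
    (Representation.tprod_apply_tensorProduct _ _ Representation.ofMulAction_apply_basis
      Representation.ofMulAction_apply_basis)
    (repDirectSum_ρ_apply_basis _ _ fun _ => Representation.ofMulAction_apply_basis) e he

section Colorings

variable {ι α β γ : Type*}

attribute [local instance] arrowAction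

lemma perm_smul_eq_comp (σ : Equiv.Perm ι) (f : ι → β) : σ • f = f ∘ ⇑σ⁻¹ := rfl

variable [Fintype ι] [DecidableEq α] [DecidableEq β] [DecidableEq γ]

def colorCount (f : ι → β) (b : β) : ℕ := #{i | f i = b}

lemma colorCount_comp_perm (f : ι → β) (σ : Equiv.Perm ι) :
    colorCount (f ∘ σ) = colorCount f := by
  funext b
  exact card_bij' (fun i _ => σ i) (fun i _ => σ.symm i) (by simp) (by simp) (by simp) (by simp)

lemma colorCount_comp_equiv (e : β ≃ γ) (f : ι → β) :
    colorCount (e ∘ f) = colorCount f ∘ e.symm := by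
  funext c
  simp [colorCount, ← e.eq_symm_apply]

lemma colorCount_fst [Fintype β] (h : ι → α × β) (a : α) :
    colorCount (Prod.fst ∘ h) a = ∑ b, colorCount h (a, b) := by
  rw [colorCount, card_eq_sum_card_fiberwise (f := fun i => (h i).2) (t := univ) (by simp)]
  simp [colorCount, filter_filter, Prod.ext_iff]

lemma colorCount_snd [Fintype α] (h : ι → α × β) (b : β) :
    colorCount (Prod.snd ∘ h) b = ∑ a, colorCount h (a, b) := by
  rw [colorCount, card_eq_sum_card_fiberwise (f := fun i => (h i).1) (t := univ) (by simp)]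
  simp [colorCount, filter_filter, Prod.ext_iff, and_comm]

lemma exists_perm_comp_eq_of_colorCount_eq {f g : ι → β} (h : colorCount f = colorCount g) :
    ∃ σ : Equiv.Perm ι, f ∘ σ = g := by
  have fiber (b : β) : {i // g i = b} ≃ {i // f i = b} := Fintype.equivOfCardEq <| by
    rw [Fintype.card_subtype, Fintype.card_subtype]
    exact (congrFun h b).symm
  exact ⟨(Equiv.sigmaFiberEquiv g).symm.trans
    ((Equiv.sigmaCongrRight fiber).trans (Equiv.sigmaFiberEquiv f)),
    funext fun i => (fiber (g i) ⟨i, rfl⟩).2⟩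

variable (ι) in
def colorings (t : β → ℕ) : SubMulAction (Equiv.Perm ι) (ι → β) where
  carrier := {f | colorCount f = t}
  smul_mem' σ f hf := by
    rw [Set.mem_ofPred_eq, perm_smul_eq_comp, colorCount_comp_perm, hf]

lemma mem_orbit_iff_colorCount_eq {f c : ι → β} :
    f ∈ orbit (Equiv.Perm ι) c ↔ colorCount f = colorCount c := by
  constructor
  · rintro ⟨σ, rfl⟩
    exact colorCount_comp_perm c σ⁻¹
  · intro h
    obtain ⟨σ, hσ⟩ := exists_perm_comp_eq_of_colorCount_eq h.symm
    exact ⟨σ⁻¹, by rw [← hσ]; rfl⟩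

def coloringsCongr (e : β ≃ γ) {t : β → ℕ} {t' : γ → ℕ} (h : ∀ b, t' (e b) = t b) :
    colorings ι t ≃ colorings ι t' :=
  Equiv.subtypeEquiv (Equiv.arrowCongr (Equiv.refl ι) e) fun f => by
    obtain rfl : t = t' ∘ e := funext fun b => (h b).symm
    change colorCount f = t' ∘ e ↔ colorCount (e ∘ f) = t'
    rw [colorCount_comp_equiv, e.comp_symm_eq]

lemma coloringsCongr_smul (e : β ≃ γ) {t : β → ℕ} {t' : γ → ℕ}
    (h : ∀ b, t' (e b) = t b) (g : Equiv.Perm ι) (f : colorings ι t) :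
    coloringsCongr e h (g • f) = g • coloringsCongr e h f :=
  rfl

variable {d n m : ℕ}

lemma stabilizer_eq_youngSubgroup (c : Fin d → Fin n) :
    stabilizer (Equiv.Perm (Fin d)) c = youngSubgroup d c := by
  ext σ
  rw [mem_stabilizer_iff, perm_smul_eq_comp, funext_iff]
  constructor
  · exact fun h i => by simpa using (h (σ i)).symm
  · exact fun h i => by simpa using (h (σ⁻¹ i)).symm

def youngQuotientEquiv (c : Fin d → Fin n) {t : Fin n → ℕ} (hc : colorCount c = t) :
    Equiv.Perm (Fin d) ⧸ youngSubgroup d c ≃ colorings (Fin d) t :=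
  (Subgroup.quotientEquivOfEq (stabilizer_eq_youngSubgroup c).symm).trans <|
    (orbitEquivQuotientStabilizer _ c).symm.trans <|
      Equiv.subtypeEquivRight fun _ => by rw [mem_orbit_iff_colorCount_eq, hc]; rfl

lemma youngQuotientEquiv_smul (c : Fin d → Fin n) {t : Fin n → ℕ} (hc : colorCount c = t)
    (g : Equiv.Perm (Fin d)) (q : Equiv.Perm (Fin d) ⧸ youngSubgroup d c) :
    youngQuotientEquiv c hc (g • q) = g • youngQuotientEquiv c hc q := by
  induction q using QuotientGroup.induction_on
  apply Subtype.ext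
  show (g * _) • c = g • (_ : Equiv.Perm (Fin d)) • c
  exact mul_smul _ _ _

def pairColoringsEquiv (mu : Fin n → ℕ) (lam : Fin m → ℕ) :
    colorings ι mu × colorings ι lam ≃
      Σ M : matrixSet mu lam, colorings ι (Function.uncurry M.1) where
  toFun fg :=
    let h : ι → Fin n × Fin m := fun i => (fg.1.1 i, fg.2.1 i)
    ⟨⟨fun a b => colorCount h (a, b),
      fun a => (colorCount_fst h a).symm.trans (congrFun fg.1.2 a),
      fun b => (colorCount_snd h b).symm.trans (congrFun fg.2.2 b)⟩, ⟨h, rfl⟩⟩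
  invFun Mh :=
    (⟨Prod.fst ∘ Mh.2.1, funext fun a => by rw [colorCount_fst, Mh.2.2]; exact Mh.1.2.1 a⟩,
     ⟨Prod.snd ∘ Mh.2.1, funext fun b => by rw [colorCount_snd, Mh.2.2]; exact Mh.1.2.2 b⟩)
  left_inv _ := rfl
  right_inv Mh := Sigma.subtype_ext (Subtype.ext (funext₂ fun a b => congrFun Mh.2.2 (a, b))) rfl

lemma pairColoringsEquiv_smul (mu : Fin n → ℕ) (lam : Fin m → ℕ) (g : Equiv.Perm ι)
    (fg : colorings ι mu × colorings ι lam) :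
    pairColoringsEquiv mu lam (g • fg) = g • pairColoringsEquiv mu lam fg := by
  -- the inverse only splits a coloring by pairs into its components, so it commutes with `g`
  rw [eq_comm, ← Equiv.symm_apply_eq]
  rfl

variable {mu : Fin n → ℕ} {lam : Fin m → ℕ} {cmu : Fin d → Fin n} {clam : Fin d → Fin m}
  {cM : matrixSet mu lam → Fin d → Fin (n * m)}
  (hcmu : realizes d cmu mu) (hclam : realizes d clam lam)
  (hcM : ∀ (M : matrixSet mu lam) (p : Fin n × Fin m),
    (Finset.univ.filter fun i => cM M i = rowMajor n m p).card = M.1 p.1 p.2)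

def youngQuotientProdEquivSigma :
    (Equiv.Perm (Fin d) ⧸ youngSubgroup d cmu) ×
        (Equiv.Perm (Fin d) ⧸ youngSubgroup d clam) ≃
      Σ M : matrixSet mu lam, Equiv.Perm (Fin d) ⧸ youngSubgroup d (cM M) :=
  ((youngQuotientEquiv cmu (funext hcmu)).prodCongr
      (youngQuotientEquiv clam (funext hclam))).trans <|
    (pairColoringsEquiv mu lam).trans <| Equiv.sigmaCongrRight fun M =>
      (coloringsCongr (rowMajor n m) (hcM M)).trans (youngQuotientEquiv (cM M) rfl).symm

lemma youngQuotientProdEquivSigma_smul (g : Equiv.Perm (Fin d))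
    (x : (Equiv.Perm (Fin d) ⧸ youngSubgroup d cmu) ×
      (Equiv.Perm (Fin d) ⧸ youngSubgroup d clam)) :
    youngQuotientProdEquivSigma hcmu hclam hcM (g • x) =
      g • youngQuotientProdEquivSigma hcmu hclam hcM x := by
  obtain ⟨q₁, q₂⟩ := x
  simp only [youngQuotientProdEquivSigma, Equiv.trans_apply, Equiv.prodCongr_apply, Prod.smul_mk,
    Prod.map, youngQuotientEquiv_smul]
  rw [← Prod.smul_mk, pairColoringsEquiv_smul]
  obtain ⟨M, h⟩ :=
    pairColoringsEquiv mu lam (youngQuotientEquiv cmu _ q₁, youngQuotientEquiv clam _ q₂)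
  exact congrArg (Sigma.mk M) <| (congrArg _ (coloringsCongr_smul _ _ g h)).trans <|
    Equiv.symm_apply_smul _ (youngQuotientEquiv_smul (cM M) rfl) g _

end Colorings

open MonoidalCategory in
theorem permutation_module_kronecker_general (k : Type) [CommRing k] (d : ℕ)
    {n m : ℕ} (mu : Fin n → ℕ) (lam : Fin m → ℕ)
    (cmu : Fin d → Fin n) (hcmu : realizes d cmu mu)
    (clam : Fin d → Fin m) (hclam : realizes d clam lam)
    (cM : matrixSet mu lam → (Fin d → Fin (n * m)))
    (hcM : ∀ (M : matrixSet mu lam) (p : Fin n × Fin m),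
      (Finset.univ.filter fun i => cM M i = rowMajor n m p).card = M.1 p.1 p.2) :
    Nonempty ((permModule k d cmu ⊗ permModule k d clam : Rep k (Equiv.Perm (Fin d)))
      ≅ repDirectSum k (fun M : matrixSet mu lam => permModule k d (cM M))) := by
  classical
  exact ⟨Rep.ofMulActionTensorIsoDirectSum k (youngQuotientProdEquivSigma hcmu hclam hcM)
    (youngQuotientProdEquivSigma_smul hcmu hclam hcM)⟩

open MonoidalCategory in
/--
**Statement 13.** Let `μ ∈ Λ(n,d)` and `λ ∈ Λ(m,d)`, and let `S` be the set of `n×m`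
matrices with nonnegative integer entries having row sums `μ` and column sums `λ`, each
read (row by row) as an element `ν` of `Λ(nm,d)`.  Then the Kronecker product
`M^μ ⊗_k M^λ`, with `S_d` acting diagonally (the monoidal tensor product of `Rep k S_d`),
is isomorphic as a `kS_d`-module to `⊕_{ν∈S} M^ν`.
-/
theorem permutation_module_kronecker (k : Type) [CommRing k] (d : ℕ)
    {n m : ℕ} (mu : Fin n → ℕ) (lam : Fin m → ℕ)
    (hmu : ∑ i, mu i = d) (hlam : ∑ j, lam j = d)
    (cmu : Fin d → Fin n) (hcmu : realizes d cmu mu)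
    (clam : Fin d → Fin m) (hclam : realizes d clam lam)
    (cM : matrixSet mu lam → (Fin d → Fin (n * m)))
    (hcM : ∀ (M : matrixSet mu lam) (p : Fin n × Fin m),
      (Finset.univ.filter fun i => cM M i = rowMajor n m p).card = M.1 p.1 p.2) :
    Nonempty ((permModule k d cmu ⊗ permModule k d clam : Rep k (Equiv.Perm (Fin d)))
      ≅ repDirectSum k (fun M : matrixSet mu lam => permModule k d (cM M))) :=
  permutation_module_kronecker_general k d mu lam cmu hcmu clam hclam cM hcM
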